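/- Exactly 12 of the 27 conjugacy classes of subgroups of the Whitten group Γ₂ consist of subgroups that are disjoint from the set D = {(ε₀, ε₁, ε₂, p) ∈ Γ₂ : ε₀ = −1 and ε₁ = ε₂}; that is, the subgroups H of Γ₂ with H ∩ D = ∅ form exactly 12 conjugacy classes. -/
import Mathlib

def whittenHom (μ : ℕ) :
    Equiv.Perm (Fin μ) →* MulAut (Option (Fin μ) → Multiplicative (ZMod 2)) where
  toFun p := MulEquiv.arrowCongr (Equiv.optionCongr p) (MulEquiv.refl _)
  map_one' := by
    ext f x
    cases x <;> rfl
  map_mul' := by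
    intro p q
    ext f x
    cases x <;> rfl

abbrev WhittenGroup (μ : ℕ) : Type :=
  (Option (Fin μ) → Multiplicative (ZMod 2)) ⋊[whittenHom μ] Equiv.Perm (Fin μ)

def subgroupConj {G : Type*} [Group G] (H K : Subgroup G) : Prop :=
  ∃ γ : G, Subgroup.map (MulAut.conj γ).toMonoidHom H = K

def neg : Multiplicative (ZMod 2) := Multiplicative.ofAdd 1

def Dset : Set (WhittenGroup 2) :=
  {g | g.left none = neg ∧ g.left (some 0) = g.left (some 1)}

/-! ### Decidability on the Whitten group -/

instance : DecidableEq (WhittenGroup 2) := fun a b =>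
  decidable_of_iff (a.left = b.left ∧ a.right = b.right)
    (by cases a; cases b; simp [SemidirectProduct.ext_iff])

instance : Fintype (WhittenGroup 2) :=
  Fintype.ofEquiv ((Option (Fin 2) → Multiplicative (ZMod 2)) × Equiv.Perm (Fin 2))
    ⟨fun p => ⟨p.1, p.2⟩, fun g => (g.left, g.right), fun _ => rfl, fun _ => rfl⟩

instance : ∀ g : WhittenGroup 2, Decidable (g ∈ Dset) := fun g =>
  decidable_of_iff (g.left none = neg ∧ g.left (some 0) = g.left (some 1)) Iff.rfl

/-! ### A concrete 16-element model of the Whitten group -/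

structure CG where val : Fin 16
  deriving DecidableEq

instance : Fintype CG :=
  Fintype.ofEquiv (Fin 16) ⟨CG.mk, CG.val, fun _ => rfl, fun _ => rfl⟩

/-- Multiplication in the concrete model, as a bit operation. -/
def m (a b : Nat) : Nat :=
  a ^^^ (if a.testBit 3 then (b &&& 9) ||| ((b >>> 1) &&& 2) ||| ((b &&& 2) <<< 1) else b)

instance : Mul CG := ⟨fun a b => ⟨⟨m a.val.val b.val.val % 16, Nat.mod_lt _ (by norm_num)⟩⟩⟩
instance : One CG := ⟨⟨0⟩⟩
instance : Inv CG := ⟨fun a => a * (a * a)⟩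

set_option maxHeartbeats 4000000 in
instance : Group CG where
  mul_assoc := by decide
  one_mul := by decide
  mul_one := by decide
  inv_mul_cancel := by decide

lemma cg_mul_val (a b : CG) : (a * b).val.val = m a.val.val b.val.val % 16 := rfl

/-- The explicit isomorphism `CG → Γ₂`. -/
def dec (n : CG) : WhittenGroup 2 :=
  ⟨fun o => Multiplicative.ofAdd (Option.elim o
      (if n.val.val.testBit 0 then 1 else 0)
      (fun i => if i.val = 0 then (if n.val.val.testBit 1 then 1 else 0)
                else (if n.val.val.testBit 2 then 1 else 0))),
   if n.val.val.testBit 3 then Equiv.swap 0 1 else 1⟩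

set_option maxHeartbeats 4000000 in
lemma dec_mul : ∀ a b : CG, dec (a * b) = dec a * dec b := by decide

set_option maxHeartbeats 4000000 in
lemma dec_inj : Function.Injective dec := by
  intro a b h
  revert h; revert a b; decide

lemma card_eq' : Fintype.card CG = Fintype.card (WhittenGroup 2) := by decide

noncomputable def eIso : CG ≃* WhittenGroup 2 :=
  MulEquiv.mk' (Equiv.ofBijective dec
    ((Fintype.bijective_iff_injective_and_card dec).2 ⟨dec_inj, card_eq'⟩)) dec_mul

lemma eIso_apply (x : CG) : eIso x = dec x := rfl

/-! ### The set `D` in the concrete model -/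

def DC : Finset CG := {⟨1⟩, ⟨7⟩, ⟨9⟩, ⟨15⟩}

set_option maxHeartbeats 1000000 in
lemma memDC : ∀ x : CG, dec x ∈ Dset ↔ x ∈ DC := by decide

def allowed : Finset CG := Finset.univ.filter (· ∉ DC)

lemma mem_allowed {x : CG} : x ∈ allowed ↔ x ∉ DC := by
  simp [allowed]

def PredC (s : Finset CG) : Prop :=
  (1 : CG) ∈ s ∧ (∀ g ∈ s, g ∉ DC) ∧ ∀ a ∈ s, ∀ b ∈ s, a * b ∈ s

/-! ### Bitmask encoding of subsets of `CG` -/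

def maskOf (s : Finset CG) : ℕ := s.fold (· ||| ·) 0 (fun x => 2 ^ x.val.val)

lemma testBit_maskOf (s : Finset CG) (i : ℕ) :
    (maskOf s).testBit i = true ↔ ∃ x ∈ s, x.val.val = i := by
  classical
  induction s using Finset.induction_on with
  | empty => simp [maskOf, Nat.zero_testBit]
  | @insert a t ha ih =>
    have hins : maskOf (insert a t) = 2 ^ a.val.val ||| maskOf t := Finset.fold_insert ha
    rw [hins]
    simp only [Nat.testBit_or, Bool.or_eq_true, Nat.testBit_two_pow, ih,
      Finset.mem_insert, decide_eq_true_eq]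
    constructor
    · rintro (h | ⟨x, hx, rfl⟩)
      · exact ⟨a, Or.inl rfl, h⟩
      · exact ⟨x, Or.inr hx, rfl⟩
    · rintro ⟨x, (rfl | hx), rfl⟩
      · exact Or.inl rfl
      · exact Or.inr ⟨x, hx, rfl⟩

/-- Fast test: the mask contains bit 0 and is closed under `m`. -/
def Q (s : Finset CG) : Prop :=
  (maskOf s).testBit 0 = true ∧
    ∀ i < 16, (maskOf s).testBit i = true →
      ∀ j < 16, (maskOf s).testBit j = true → (maskOf s).testBit (m i j % 16) = true

instance : DecidablePred Q := fun s => by unfold Q; infer_instance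

lemma q_iff (s : Finset CG) (hsub : ∀ g ∈ s, g ∉ DC) : PredC s ↔ Q s := by
  have hbit : ∀ x : CG, (maskOf s).testBit x.val.val = true ↔ x ∈ s := by
    intro x
    rw [testBit_maskOf]
    constructor
    · rintro ⟨y, hy, hval⟩
      have hyx : y = x := by
        cases x; cases y
        exact congrArg CG.mk (Fin.ext hval)
      exact hyx ▸ hy
    · intro hx; exact ⟨x, hx, rfl⟩
  constructor
  · intro h
    refine ⟨(hbit 1).2 h.1, ?_⟩
    intro i hi hti j hj htj
    obtain ⟨x, hx, hxi⟩ := (testBit_maskOf s i).1 hti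
    obtain ⟨y, hy, hyj⟩ := (testBit_maskOf s j).1 htj
    have hmem := (hbit (x * y)).2 (h.2.2 x hx y hy)
    rwa [cg_mul_val, hxi, hyj] at hmem
  · intro h
    have hone : (1 : CG) ∈ s := (hbit 1).1 h.1
    refine ⟨hone, hsub, ?_⟩
    intro a ha b hb
    have hm := h.2 a.val.val a.val.isLt ((hbit a).2 ha) b.val.val b.val.isLt ((hbit b).2 hb)
    rw [← cg_mul_val] at hm
    exact (hbit (a * b)).1 hm

def Lsub : Finset (Finset CG) := allowed.powerset.filter Q

lemma predC_iff_mem (s : Finset CG) : PredC s ↔ s ∈ Lsub := by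
  constructor
  · intro h
    have hsub : s ⊆ allowed := fun g hg => mem_allowed.2 (h.2.1 g hg)
    exact Finset.mem_filter.2 ⟨Finset.mem_powerset.2 hsub,
      (q_iff s h.2.1).1 h⟩
  · intro h
    obtain ⟨hpow, hq⟩ := Finset.mem_filter.1 h
    have hsub : ∀ g ∈ s, g ∉ DC := fun g hg =>
      mem_allowed.1 (Finset.mem_powerset.1 hpow hg)
    exact (q_iff s hsub).2 hq

def conjF (s t : Finset CG) : Prop := ∃ γ : CG, s.image (fun x => γ * x * γ⁻¹) = t

instance : ∀ s t, Decidable (conjF s t) := fun s t => by unfold conjF; infer_instance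

/-! ### From finsets to subgroups of `CG` -/

def toSub (s : Finset CG) (h : PredC s) : Subgroup CG where
  carrier := ↑s
  one_mem' := h.1
  mul_mem' := fun {a b} ha hb => h.2.2 a ha b hb
  inv_mem' := fun {x} hx => h.2.2 x hx (x * x) (h.2.2 x hx x hx)

lemma mem_toSub {s : Finset CG} {h : PredC s} {x : CG} : x ∈ toSub s h ↔ x ∈ s := Iff.rfl

def AvoidC (H : Subgroup CG) : Prop := ∀ x ∈ H, eIso x ∉ Dset

lemma toSub_avoid {s : Finset CG} (h : PredC s) : AvoidC (toSub s h) := by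
  intro x hx hD
  exact h.2.1 x hx ((memDC x).1 (by rwa [eIso_apply] at hD))

noncomputable def E2 : {s : Finset CG // PredC s} ≃ {H : Subgroup CG // AvoidC H} := by
  refine Equiv.ofBijective (fun s => ⟨toSub s.1 s.2, toSub_avoid s.2⟩) ⟨?_, ?_⟩
  · rintro ⟨s, hs⟩ ⟨t, ht⟩ h
    have h' : (toSub s hs : Set CG) = (toSub t ht : Set CG) := by
      rw [show toSub s hs = toSub t ht from congrArg Subtype.val h]
    exact Subtype.ext (Finset.coe_injective h')
  · rintro ⟨H, hH⟩
    classical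
    refine ⟨⟨Finset.univ.filter (fun x => x ∈ H), ?_⟩, ?_⟩
    · refine ⟨Finset.mem_filter.2 ⟨Finset.mem_univ _, H.one_mem⟩, ?_, ?_⟩
      · intro g hg hgD
        exact hH g (Finset.mem_filter.1 hg).2
          (by rw [eIso_apply]; exact (memDC g).2 hgD)
      · intro a ha b hb
        exact Finset.mem_filter.2 ⟨Finset.mem_univ _,
          H.mul_mem (Finset.mem_filter.1 ha).2 (Finset.mem_filter.1 hb).2⟩
    · apply Subtype.ext
      ext x
      simp [mem_toSub, Finset.mem_filter]

lemma conj_apply (γ x : CG) : (MulAut.conj γ).toMonoidHom x = γ * x * γ⁻¹ := rfl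

lemma map_toSub_carrier (γ : CG) (s : Finset CG) (hs : PredC s) :
    ((toSub s hs).map (MulAut.conj γ).toMonoidHom : Set CG)
      = ↑(s.image fun x => γ * x * γ⁻¹) := by
  rw [Subgroup.coe_map, Finset.coe_image]
  rfl

lemma R2 (s t : Finset CG) (hs : PredC s) (ht : PredC t) :
    conjF s t ↔ subgroupConj (toSub s hs) (toSub t ht) := by
  constructor
  · rintro ⟨γ, h⟩
    refine ⟨γ, ?_⟩
    apply SetLike.ext'
    rw [map_toSub_carrier, h]
    rfl
  · rintro ⟨γ, h⟩
    refine ⟨γ, ?_⟩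
    apply Finset.coe_injective
    rw [← map_toSub_carrier γ s hs, h]
    rfl

/-! ### From subgroups of `CG` to subgroups of `Γ₂` -/

lemma comp_symm_eq : eIso.symm.toMonoidHom.comp eIso.toMonoidHom = MonoidHom.id CG :=
  MonoidHom.ext fun x => eIso.symm_apply_apply x

lemma comp_eq_symm :
    eIso.toMonoidHom.comp eIso.symm.toMonoidHom = MonoidHom.id (WhittenGroup 2) :=
  MonoidHom.ext fun x => eIso.apply_symm_apply x

noncomputable def Phi : Subgroup CG ≃ Subgroup (WhittenGroup 2) where
  toFun H := H.map eIso.toMonoidHom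
  invFun H := H.map eIso.symm.toMonoidHom
  left_inv H := by
    show (H.map eIso.toMonoidHom).map eIso.symm.toMonoidHom = H
    rw [Subgroup.map_map, comp_symm_eq, Subgroup.map_id]
  right_inv H := by
    show (H.map eIso.symm.toMonoidHom).map eIso.toMonoidHom = H
    rw [Subgroup.map_map, comp_eq_symm, Subgroup.map_id]

lemma avoid_Phi (H : Subgroup CG) :
    (∀ g ∈ Phi H, g ∉ Dset) ↔ AvoidC H := by
  constructor
  · intro h x hx
    exact h (eIso x) ⟨x, hx, rfl⟩
  · rintro h g ⟨x, hx, rfl⟩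
    exact h x hx

lemma map_conj_comm (δ : CG) (H : Subgroup CG) :
    (H.map (MulAut.conj δ).toMonoidHom).map eIso.toMonoidHom
      = (H.map eIso.toMonoidHom).map (MulAut.conj (eIso δ)).toMonoidHom := by
  rw [Subgroup.map_map, Subgroup.map_map]
  congr 1
  refine MonoidHom.ext fun x => ?_
  show eIso (δ * x * δ⁻¹) = eIso δ * eIso x * (eIso δ)⁻¹
  simp [map_mul]

lemma R1 (H K : Subgroup CG) : subgroupConj H K ↔ subgroupConj (Phi H) (Phi K) := by
  constructor
  · rintro ⟨δ, h⟩
    refine ⟨eIso δ, ?_⟩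
    show (H.map eIso.toMonoidHom).map (MulAut.conj (eIso δ)).toMonoidHom = Phi K
    rw [← map_conj_comm, h]
    rfl
  · rintro ⟨γ, h⟩
    refine ⟨eIso.symm γ, ?_⟩
    apply Phi.injective
    show (H.map (MulAut.conj (eIso.symm γ)).toMonoidHom).map eIso.toMonoidHom = Phi K
    rw [map_conj_comm, eIso.apply_symm_apply]
    exact h

noncomputable def E1 : {H : Subgroup CG // AvoidC H} ≃
    {H : Subgroup (WhittenGroup 2) // ∀ g ∈ H, g ∉ Dset} :=
  Equiv.subtypeEquiv Phi (fun H => (avoid_Phi H).symm)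

/-! ### The count on the concrete side -/

def E3 : {s : Finset CG // PredC s} ≃ {s : Finset CG // s ∈ Lsub} :=
  Equiv.subtypeEquivRight predC_iff_mem

lemma conjF_refl (s : Finset CG) : conjF s s := by
  refine ⟨1, ?_⟩
  have h : (fun x : CG => (1 : CG) * x * 1⁻¹) = id := by funext x; simp
  rw [h, Finset.image_id]

lemma conjF_symm {s t : Finset CG} : conjF s t → conjF t s := by
  rintro ⟨γ, h⟩
  refine ⟨γ⁻¹, ?_⟩
  rw [← h, Finset.image_image]
  have h2 : ((fun x : CG => γ⁻¹ * x * γ⁻¹⁻¹) ∘ fun x => γ * x * γ⁻¹) = id := by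
    funext x; simp [mul_assoc]
  rw [h2, Finset.image_id]

lemma conjF_trans {s t u : Finset CG} : conjF s t → conjF t u → conjF s u := by
  rintro ⟨γ, h⟩ ⟨δ, h'⟩
  refine ⟨δ * γ, ?_⟩
  rw [← h', ← h, Finset.image_image]
  congr 1
  funext x
  simp [mul_assoc, mul_inv_rev]

instance stL : Setoid {s : Finset CG // s ∈ Lsub} where
  r a b := conjF a.1 b.1
  iseqv := ⟨fun a => conjF_refl a.1, conjF_symm, conjF_trans⟩

instance : ∀ a b : {s : Finset CG // s ∈ Lsub}, Decidable (a ≈ b) := fun a b => by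
  show Decidable (conjF a.1 b.1); infer_instance

set_option maxHeartbeats 12000000 in
set_option maxRecDepth 100000 in
lemma card12 : Fintype.card (Quotient stL) = 12 := by decide

/-! ### Main theorem -/

/-- The subgroups `H` of Γ₂ with `H ∩ D = ∅` form exactly 12
conjugacy classes. -/
theorem whittenGroup_two_subgroups_avoiding_D :
    Nat.card (Quot fun H K : {H : Subgroup (WhittenGroup 2) // ∀ g ∈ H, g ∉ Dset} =>
      subgroupConj H.1 K.1) = 12 := by
  have e1 : (Quot fun a b : {H : Subgroup CG // AvoidC H} => subgroupConj a.1 b.1)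
      ≃ (Quot fun H K : {H : Subgroup (WhittenGroup 2) // ∀ g ∈ H, g ∉ Dset} =>
          subgroupConj H.1 K.1) :=
    Quot.congr E1 (fun a b => R1 a.1 b.1)
  have e2 : (Quot fun a b : {s : Finset CG // PredC s} => conjF a.1 b.1)
      ≃ (Quot fun a b : {H : Subgroup CG // AvoidC H} => subgroupConj a.1 b.1) :=
    Quot.congr E2 (fun a b => R2 a.1 b.1 a.2 b.2)
  have e3 : (Quot fun a b : {s : Finset CG // PredC s} => conjF a.1 b.1)
      ≃ Quotient stL :=
    Quot.congr E3 (fun _ _ => Iff.rfl)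
  rw [← Nat.card_congr e1, ← Nat.card_congr e2, Nat.card_congr e3,
    Nat.card_eq_fintype_card, card12]
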